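/- Let G be a topological group acting continuously on a topological space M, with p ∈ M, and let ev : G → M be the evaluation map ev(f) = f(p). Then the image of the induced homomorphism ev_* : π₁(G, id) → π₁(M, p) is contained in the center of π₁(M, p). -/

import Mathlib

open CategoryTheory FundamentalGroupoid unitInterval Topology Topology.Homotopy

universe u v

noncomputable section

attribute [local instance] Path.Homotopic.setoid

/-- The homomorphism on fundamental groups induced by a continuous map. -/
def pi1Map {X Y : Type u} [TopologicalSpace X] [TopologicalSpace Y] (f : C(X, Y)) (x : X) :
    FundamentalGroup X x →* FundamentalGroup Y (f x) :=
  (πₘ (show TopCat.of X ⟶ TopCat.of Y from TopCat.ofHom f)).mapEnd ⟨x⟩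

/-- A Serre fibration: the homotopy lifting property with respect to all cubes. -/
def IsSerreFibration {E : Type u} {B : Type v} [TopologicalSpace E] [TopologicalSpace B]
    (p : C(E, B)) : Prop :=
  ∀ n : ℕ, ∀ (H : C((Fin n → I) × I, B)) (h₀ : C(Fin n → I, E)),
    (∀ y, p (h₀ y) = H (y, 0)) →
      ∃ H' : C((Fin n → I) × I, E), p.comp H' = H ∧ ∀ y, H' (y, 0) = h₀ y

/-- A space is aspherical if all of its homotopy groups in degrees `≥ 2` vanish. -/
def Aspherical (X : Type u) [TopologicalSpace X] : Prop :=
  ∀ n : ℕ, 2 ≤ n → ∀ x : X, Subsingleton (HomotopyGroup.Pi n X x)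

/-- A space admits a CW structure if it is homeomorphic to (the realization of)
a CW complex. -/
def HasCWStructure (X : Type u) [TopologicalSpace X] : Prop :=
  ∃ (Y : TopCat.{u}) (_K : TopCat.CWComplex Y), Nonempty (X ≃ₜ Y)

/-! The action map `μ(g, m) = g • m` on `G × M` restricts to `ev` on `G × {p}` and to the
identity on `{1} × M`. In `π₁(G × M)` the loops `α × {p}` and `{1} × β` commute, both composites
being homotopic to `α × β`; hence so do their images `ev ∘ α` and `β` under `μ`. -/

theorem Path.Homotopic.Quotient.prod_refl_trans_refl_prod {A B : Type*} [TopologicalSpace A]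
    [TopologicalSpace B] {a₀ a₁ : A} {b₀ b₁ : B} (q : Path.Homotopic.Quotient a₀ a₁)
    (r : Path.Homotopic.Quotient b₀ b₁) :
    (prod q (.refl b₀)).trans (prod (.refl a₁) r) =
      (prod (.refl a₀) r).trans (prod q (.refl b₁)) := by
  simp only [Path.Homotopic.comp_prod_eq_prod_comp, trans_refl, refl_trans]

theorem Path.Homotopic.trans_comm_of_eq_map_prod {A B X : Type*} [TopologicalSpace A]
    [TopologicalSpace B] [TopologicalSpace X] (Φ : C(A × B, X)) {a : A} {b : B}
    (α : Path a a) (β : Path b b) {x : X} (γ δ : Path x x)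
    (hγ : ∀ t, γ t = Φ (α t, b)) (hδ : ∀ t, δ t = Φ (a, β t)) :
    (γ.trans δ).Homotopic (δ.trans γ) := by
  obtain rfl : x = Φ (a, b) := by simpa using hγ 0
  obtain rfl : γ = (α.prod (.refl b)).map Φ.continuous := Path.ext (funext hγ)
  obtain rfl : δ = ((Path.refl a).prod β).map Φ.continuous := Path.ext (funext hδ)
  simp only [← Path.map_trans]
  exact (Quotient.exact (Quotient.prod_refl_trans_refl_prod (.mk α) (.mk β))).map Φ

theorem evaluation_image_central_general {G M : Type u} [Group G] [TopologicalSpace G]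
    [TopologicalSpace M]
    [MulAction G M] [ContinuousSMul G M] (p : M)
    (ev : C(G, M)) (hev : ∀ g : G, ev g = g • p) (hb : ev 1 = p) :
    ∀ a : FundamentalGroup G 1,
      (hb ▸ pi1Map ev 1 a : FundamentalGroup M p) ∈
        Subgroup.center (FundamentalGroup M p) := by
  subst hb
  intro a
  refine Subgroup.mem_center_iff.2 fun b => ?_
  induction a using Path.Homotopic.Quotient.ind with | mk α =>
  induction b using Path.Homotopic.Quotient.ind with | mk β =>
  have hα (t : I) : ev (α t) = α t • ev 1 := hev (α t)
  have hβ (t : I) : β t = (1 : G) • β t := (one_smul G _).symm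
  exact Quotient.sound <| Path.Homotopic.trans_comm_of_eq_map_prod
    ⟨fun q : G × M => q.1 • q.2, by fun_prop⟩ α β _ _ hα hβ

/-- Let `G` be a topological group acting continuously on a
(path-connected) topological space `M`, with `p ∈ M`, and let `ev : G → M` be the
evaluation map `ev(f) = f(p)`.  Then the image of the induced homomorphism
`ev⁎ : π₁(G, 1) → π₁(M, p)` is contained in the center of `π₁(M, p)`. -/
theorem evaluation_image_central {G M : Type u} [Group G] [TopologicalSpace G]
    [IsTopologicalGroup G] [TopologicalSpace M] [PathConnectedSpace M]
    [MulAction G M] [ContinuousSMul G M] (p : M)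
    (ev : C(G, M)) (hev : ∀ g : G, ev g = g • p) (hb : ev 1 = p) :
    ∀ a : FundamentalGroup G 1,
      (hb ▸ pi1Map ev 1 a : FundamentalGroup M p) ∈
        Subgroup.center (FundamentalGroup M p) :=
  evaluation_image_central_general p ev hev hb

end
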